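/- Let M : [0,τ] → Sym_n(ℝ) be a differentiable function taking values in the n×n real symmetric matrices such that ∂_t M(t) ⪰ M(t)² (in the positive semidefinite order) for all t ∈ [0,τ]. Then for every unit vector w ∈ ℝⁿ and every t ∈ [0,τ] with 1 − t⟨w, M(0)w⟩ > 0, one has ⟨w, M(t)w⟩ ≥ ⟨w, M(0)w⟩ / (1 − t⟨w, M(0)w⟩). -/

import Mathlib

open Matrix Set

/-!
Along a unit vector `w`, the scalar `f t = ⟨w, M t w⟩` satisfies the Riccati inequality `f' ≥ f²`:
`⟨w, M' w⟩ ≥ ⟨w, M² w⟩ = ‖M w‖² ≥ ⟨w, M w⟩²` by the matrix inequality, symmetry and Cauchy–Schwarz.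
The solution of `u' = u²`, `u 0 = f 0`, is `u t = f 0 / (1 - t f 0)`, and `f ≥ u` follows from the
comparison principle applied to the strict sub-solutions `u s - ε exp (C (s - t))`, `C > 2 u`.
-/

theorem hasDerivAt_dotProduct_mulVec {m n : Type*} [Fintype m] [Fintype n]
    {M : ℝ → Matrix m n ℝ} {M' : Matrix m n ℝ} {t : ℝ} (v : m → ℝ) (w : n → ℝ)
    (hM : ∀ i j, HasDerivAt (fun s => M s i j) (M' i j) t) :
    HasDerivAt (fun s => v ⬝ᵥ M s *ᵥ w) (v ⬝ᵥ M' *ᵥ w) t := by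
  simp only [dotProduct, mulVec]
  exact HasDerivAt.fun_sum fun i _ =>
    (HasDerivAt.fun_sum fun j _ => (hM i j).mul_const (w j)).const_mul (v i)

theorem sq_dotProduct_mulVec_le {n : Type*} [Fintype n] {A : Matrix n n ℝ} (hA : A.IsSymm)
    (w : n → ℝ) : (w ⬝ᵥ A *ᵥ w) ^ 2 ≤ (∑ i, w i ^ 2) * (w ⬝ᵥ (A * A) *ᵥ w) := by
  have hAA : w ⬝ᵥ (A * A) *ᵥ w = ∑ i, (A *ᵥ w) i ^ 2 := by
    rw [← mulVec_mulVec, dotProduct_mulVec, ← hA.eq, vecMul_transpose, hA.eq]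
    simp only [dotProduct, sq]
  rw [hAA]
  exact Finset.sum_mul_sq_le_sq_mul_sq _ _ _

theorem dotProduct_mulVec_le_of_posSemidef_sub {n : Type*} [Fintype n] {A B : Matrix n n ℝ}
    (h : (A - B).PosSemidef) (w : n → ℝ) : w ⬝ᵥ B *ᵥ w ≤ w ⬝ᵥ A *ᵥ w := by
  have hpsd := h.dotProduct_mulVec_nonneg w
  rwa [star_trivial, sub_mulVec, dotProduct_sub, sub_nonneg] at hpsd

section Riccati

variable {a s t : ℝ}

theorem one_sub_mul_pos_of_mem_Icc (ht : 0 < 1 - t * a) (hs : s ∈ Icc 0 t) :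
    0 < 1 - s * a := by
  rcases le_total 0 a with ha | ha <;> nlinarith [hs.1, hs.2]

theorem div_one_sub_mul_le_of_mem_Icc (ht : 0 < 1 - t * a) (hs : s ∈ Icc 0 t) :
    a / (1 - s * a) ≤ a / (1 - t * a) := by
  rw [div_le_div_iff₀ (one_sub_mul_pos_of_mem_Icc ht hs) ht]
  nlinarith [mul_le_mul_of_nonneg_right hs.2 (sq_nonneg a)]

theorem hasDerivAt_div_one_sub_mul (h : 1 - s * a ≠ 0) :
    HasDerivAt (fun s => a / (1 - s * a)) ((a / (1 - s * a)) ^ 2) s := by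
  have hden : HasDerivAt (fun s => 1 - s * a) (-a) s := by
    simpa using ((hasDerivAt_id s).mul_const a).const_sub 1
  exact ((hasDerivAt_const s a).div hden h).congr_deriv (by rw [div_pow]; ring)

variable {f f' : ℝ → ℝ}

theorem div_one_sub_mul_sub_le_of_sq_le_deriv (ht₀ : 0 ≤ t)
    (hf : ∀ s ∈ Icc 0 t, HasDerivAt f (f' s) s) (hff' : ∀ s ∈ Icc 0 t, f s ^ 2 ≤ f' s)
    (ht : 0 < 1 - t * f 0) {ε : ℝ} (hε : 0 < ε) :
    f 0 / (1 - t * f 0) - ε ≤ f t := by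
  set u : ℝ → ℝ := fun s => f 0 / (1 - s * f 0)
  -- `u` is increasing, so `C > 2 u` on `[0, t]`.
  set C := 2 * u t + 1
  set B : ℝ → ℝ := fun s => u s - ε * Real.exp (C * (s - t))
  set B' : ℝ → ℝ := fun s => u s ^ 2 - ε * (Real.exp (C * (s - t)) * C)
  have hB : ∀ s ∈ Icc 0 t, HasDerivAt B (B' s) s := fun s hs =>
    (hasDerivAt_div_one_sub_mul (one_sub_mul_pos_of_mem_Icc ht hs).ne').sub
      ((((hasDerivAt_id s).sub_const t).const_mul C).exp.const_mul ε |>.congr_deriv (by simp))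
  have hB'_lt : ∀ s ∈ Icc 0 t, B' s < B s ^ 2 := fun s hs => by
    have hu : u s ≤ u t := div_one_sub_mul_le_of_mem_Icc ht hs
    have he := Real.exp_pos (C * (s - t))
    have hC : 0 < C - 2 * u s := by simp only [C]; linarith
    have hgap : B s ^ 2 - B' s = ε * Real.exp (C * (s - t)) * (C - 2 * u s)
        + (ε * Real.exp (C * (s - t))) ^ 2 := by
      simp only [B, B']; ring
    linarith [mul_pos (mul_pos hε he) hC, sq_nonneg (ε * Real.exp (C * (s - t)))]
  have hcmp := image_le_of_deriv_right_lt_deriv_boundary'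
    (fun s hs => (hB s hs).continuousAt.continuousWithinAt)
    (fun s hs => (hB s (Ico_subset_Icc_self hs)).hasDerivWithinAt)
    (by simpa [B, u] using (mul_pos hε (Real.exp_pos _)).le)
    (fun s hs => (hf s hs).continuousAt.continuousWithinAt)
    (fun s hs => (hf s (Ico_subset_Icc_self hs)).hasDerivWithinAt)
    (fun s hs hBf => by
      have hs' := Ico_subset_Icc_self hs
      exact (hB'_lt s hs').trans_le (hBf ▸ hff' s hs'))
    (right_mem_Icc.2 ht₀)
  simpa [B, u] using hcmp

theorem div_one_sub_mul_le_of_sq_le_deriv (ht₀ : 0 ≤ t)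
    (hf : ∀ s ∈ Icc 0 t, HasDerivAt f (f' s) s) (hff' : ∀ s ∈ Icc 0 t, f s ^ 2 ≤ f' s)
    (ht : 0 < 1 - t * f 0) :
    f 0 / (1 - t * f 0) ≤ f t :=
  le_of_forall_pos_le_add fun _ hε => by
    linarith [div_one_sub_mul_sub_le_of_sq_le_deriv ht₀ hf hff' ht hε]

end Riccati

theorem matrix_diff_ineq_scalar_bound_general
    {n : ℕ} (τ : ℝ)
    (M : ℝ → Matrix (Fin n) (Fin n) ℝ)
    (hsymm : ∀ t ∈ Set.Icc (0:ℝ) τ, (M t).IsSymm)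
    (hdiff : ∀ t ∈ Set.Icc (0:ℝ) τ, ∀ i j : Fin n,
      DifferentiableAt ℝ (fun s => M s i j) t)
    (hineq : ∀ t ∈ Set.Icc (0:ℝ) τ,
      ((Matrix.of fun i j => deriv (fun s => M s i j) t) - M t * M t).PosSemidef) :
    ∀ w : Fin n → ℝ, (∑ i, (w i)^2 = 1) →
      ∀ t ∈ Set.Icc (0:ℝ) τ, 0 < 1 - t * (w ⬝ᵥ (M 0).mulVec w) →
        (w ⬝ᵥ (M 0).mulVec w) / (1 - t * (w ⬝ᵥ (M 0).mulVec w))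
          ≤ w ⬝ᵥ (M t).mulVec w := by
  intro w hw t ht hpos
  set M' : ℝ → Matrix (Fin n) (Fin n) ℝ := fun s => of fun i j => deriv (fun s => M s i j) s
  have hsub : Icc 0 t ⊆ Icc 0 τ := Icc_subset_Icc_right ht.2
  have hderiv : ∀ s ∈ Icc 0 t, HasDerivAt (fun s => w ⬝ᵥ M s *ᵥ w) (w ⬝ᵥ M' s *ᵥ w) s :=
    fun s hs => hasDerivAt_dotProduct_mulVec w w fun i j => (hdiff s (hsub hs) i j).hasDerivAt
  have hriccati : ∀ s ∈ Icc 0 t, (w ⬝ᵥ M s *ᵥ w) ^ 2 ≤ w ⬝ᵥ M' s *ᵥ w := fun s hs => by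
    have hcs := sq_dotProduct_mulVec_le (hsymm s (hsub hs)) w
    rw [hw, one_mul] at hcs
    exact hcs.trans (dotProduct_mulVec_le_of_posSemidef_sub (hineq s (hsub hs)) w)
  exact div_one_sub_mul_le_of_sq_le_deriv ht.1 hderiv hriccati hpos

/-- Lemma: scalar bound from a matrix differential inequality.
If `M : [0,τ] → Sym_n(ℝ)` is differentiable with `∂_t M(t) ⪰ M(t)²` on `[0,τ]`,
then for every unit vector `w` and every `t ∈ [0,τ]` with `1 − t⟨w, M(0)w⟩ > 0`,
`⟨w, M(t)w⟩ ≥ ⟨w, M(0)w⟩ / (1 − t⟨w, M(0)w⟩)`. -/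
theorem matrix_diff_ineq_scalar_bound
    {n : ℕ} (τ : ℝ) (hτ : 0 ≤ τ)
    (M : ℝ → Matrix (Fin n) (Fin n) ℝ)
    (hsymm : ∀ t ∈ Set.Icc (0:ℝ) τ, (M t).IsSymm)
    (hdiff : ∀ t ∈ Set.Icc (0:ℝ) τ, ∀ i j : Fin n,
      DifferentiableAt ℝ (fun s => M s i j) t)
    (hineq : ∀ t ∈ Set.Icc (0:ℝ) τ,
      ((Matrix.of fun i j => deriv (fun s => M s i j) t) - M t * M t).PosSemidef) :
    ∀ w : Fin n → ℝ, (∑ i, (w i)^2 = 1) →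
      ∀ t ∈ Set.Icc (0:ℝ) τ, 0 < 1 - t * (w ⬝ᵥ (M 0).mulVec w) →
        (w ⬝ᵥ (M 0).mulVec w) / (1 - t * (w ⬝ᵥ (M 0).mulVec w))
          ≤ w ⬝ᵥ (M t).mulVec w :=
  matrix_diff_ineq_scalar_bound_general τ M hsymm hdiff hineq
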